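/- arXiv:1404.3778 — 3 statements merged into one kernel-verified Lean document; each statement's English description precedes it below -/
import Mathlib

section
/- Let w ∈ ℂ with Re(w) ≤ 0 and let n be a natural number with n > |w| + |w|²·max(1, e/ε) for some ε > 0. Then |(1 + w/n)^n − exp(w)| < ε. -/
/-!
Put `z = w / n`, so that `exp w = (exp z) ^ n`. Both `exp z` and `1 + z` have norm at most
`1 + ‖z‖ ^ 2` (this is where `Re w ≤ 0` enters), and `(1 + ‖z‖ ^ 2) ^ n ≤ exp (‖w‖ ^ 2 / n) ≤ e`.
Telescoping `a ^ n - b ^ n` and `‖exp z - 1 - z‖ ≤ ‖z‖ ^ 2` give the error bound `e ‖w‖ ^ 2 / n`.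
-/

theorem norm_pow_sub_pow_le_of_norm_le {R : Type*} [SeminormedCommRing R] [NormOneClass R]
    {a b : R} {M : ℝ} (ha : ‖a‖ ≤ M) (hb : ‖b‖ ≤ M) (n : ℕ) :
    ‖a ^ n - b ^ n‖ ≤ n * M ^ (n - 1) * ‖a - b‖ := by
  have hM : 0 ≤ M := (norm_nonneg a).trans ha
  rw [← geom_sum₂_mul]
  refine (norm_mul_le _ _).trans (mul_le_mul_of_nonneg_right ?_ (norm_nonneg _))
  calc ‖∑ i ∈ Finset.range n, a ^ i * b ^ (n - 1 - i)‖
      ≤ ∑ i ∈ Finset.range n, ‖a ^ i * b ^ (n - 1 - i)‖ := norm_sum_le _ _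
    _ ≤ ∑ _i ∈ Finset.range n, M ^ (n - 1) := by
      refine Finset.sum_le_sum fun i hi => ?_
      have hin : i + (n - 1 - i) = n - 1 := by
        rw [Finset.mem_range] at hi
        omega
      calc ‖a ^ i * b ^ (n - 1 - i)‖ ≤ ‖a‖ ^ i * ‖b‖ ^ (n - 1 - i) :=
            (norm_mul_le _ _).trans (mul_le_mul (norm_pow_le _ _) (norm_pow_le _ _)
              (norm_nonneg _) (pow_nonneg (norm_nonneg _) _))
        _ ≤ M ^ i * M ^ (n - 1 - i) :=
            mul_le_mul (pow_le_pow_left₀ (norm_nonneg _) ha i)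
              (pow_le_pow_left₀ (norm_nonneg _) hb _) (by positivity) (pow_nonneg hM _)
        _ = M ^ (n - 1) := by rw [← pow_add, hin]
    _ = n * M ^ (n - 1) := by simp

namespace Complex

theorem norm_exp_le_one_of_re_nonpos {z : ℂ} (hz : z.re ≤ 0) : ‖exp z‖ ≤ 1 := by
  rw [norm_exp]
  exact Real.exp_le_one_iff.mpr hz

theorem norm_one_add_le_one_add_sq_of_re_nonpos {z : ℂ} (hz : z.re ≤ 0) :
    ‖1 + z‖ ≤ 1 + ‖z‖ ^ 2 := by
  have hsq : ‖1 + z‖ ^ 2 ≤ (1 + ‖z‖ ^ 2) ^ 2 := by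
    rw [Complex.sq_norm, normSq_add]
    simp only [normSq_one, one_mul, conj_re]
    rw [← Complex.sq_norm]
    nlinarith [sq_nonneg ‖z‖]
  exact (pow_le_pow_iff_left₀ (norm_nonneg _) (by positivity) two_ne_zero).mp hsq

theorem norm_one_add_div_pow_sub_exp_le {w : ℂ} (hw : w.re ≤ 0) {n : ℕ} (hn : 0 < n)
    (hwn : ‖w‖ ^ 2 ≤ n) :
    ‖(1 + w / n) ^ n - exp w‖ ≤ Real.exp 1 * ‖w‖ ^ 2 / n := by
  set z := w / n with hz_def
  have hn' : (0 : ℝ) < n := Nat.cast_pos.mpr hn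
  have hz_re : z.re ≤ 0 := by
    rw [hz_def, div_natCast_re]
    exact div_nonpos_of_nonpos_of_nonneg hw hn'.le
  have hz_sq : ‖z‖ ^ 2 = ‖w‖ ^ 2 / n ^ 2 := by
    rw [hz_def, norm_div, norm_natCast, div_pow]
  have hz_sq_le : (n : ℝ) * ‖z‖ ^ 2 ≤ 1 := by
    rw [hz_sq, mul_div_assoc', div_le_one (by positivity)]
    nlinarith
  have hz_le_one : ‖z‖ ≤ 1 := (sq_le_one_iff₀ (norm_nonneg _)).mp <|
    (le_mul_of_one_le_left (sq_nonneg _) (Nat.one_le_cast.mpr hn)).trans hz_sq_le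
  have hexp : exp w = exp z ^ n := by
    rw [← exp_nat_mul, hz_def, mul_div_cancel₀ _ (Nat.cast_ne_zero.mpr hn.ne')]
  have hM : (1 + ‖z‖ ^ 2) ^ (n - 1) ≤ Real.exp 1 :=
    calc (1 + ‖z‖ ^ 2) ^ (n - 1) ≤ Real.exp (‖z‖ ^ 2) ^ (n - 1) := by
          gcongr
          linarith [Real.add_one_le_exp (‖z‖ ^ 2)]
      _ ≤ Real.exp (‖z‖ ^ 2) ^ n :=
          pow_le_pow_right₀ (Real.one_le_exp (by positivity)) (Nat.sub_le n 1)
      _ = Real.exp (n * ‖z‖ ^ 2) := by rw [Real.exp_nat_mul]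
      _ ≤ Real.exp 1 := Real.exp_le_exp.mpr hz_sq_le
  calc ‖(1 + z) ^ n - exp w‖ = ‖exp z ^ n - (1 + z) ^ n‖ := by rw [hexp, norm_sub_rev]
    _ ≤ n * (1 + ‖z‖ ^ 2) ^ (n - 1) * ‖exp z - (1 + z)‖ :=
        norm_pow_sub_pow_le_of_norm_le
          ((norm_exp_le_one_of_re_nonpos hz_re).trans (le_add_of_nonneg_right (sq_nonneg _)))
          (norm_one_add_le_one_add_sq_of_re_nonpos hz_re) n
    _ ≤ n * Real.exp 1 * ‖z‖ ^ 2 := by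
        rw [← sub_sub]
        gcongr
        exact norm_exp_sub_one_sub_id_le hz_le_one
    _ = Real.exp 1 * ‖w‖ ^ 2 / n := by
        rw [hz_sq]
        field_simp

end Complex

theorem stmt1 (w : ℂ) (hw : w.re ≤ 0) (ε : ℝ) (hε : 0 < ε) (n : ℕ)
    (hn : ‖w‖ + ‖w‖ ^ 2 * max 1 (Real.exp 1 / ε) < n) :
    ‖(1 + w / n) ^ n - Complex.exp w‖ < ε := by
  have hw_sq : ‖w‖ ^ 2 ≤ ‖w‖ ^ 2 * max 1 (Real.exp 1 / ε) :=
    le_mul_of_one_le_right (by positivity) (le_max_left _ _)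
  have hw_sq_e : ‖w‖ ^ 2 * (Real.exp 1 / ε) ≤ ‖w‖ ^ 2 * max 1 (Real.exp 1 / ε) :=
    mul_le_mul_of_nonneg_left (le_max_right _ _) (by positivity)
  have hw_sq_lt : ‖w‖ ^ 2 < n := by linarith [norm_nonneg w]
  have hn_pos : (0 : ℝ) < n := by linarith [sq_nonneg ‖w‖]
  have hw_sq_e_lt : Real.exp 1 * ‖w‖ ^ 2 < ε * n := by
    rw [← div_lt_iff₀' hε, mul_div_right_comm, mul_comm]
    linarith [norm_nonneg w]
  calc ‖(1 + w / n) ^ n - Complex.exp w‖ ≤ Real.exp 1 * ‖w‖ ^ 2 / n :=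
        Complex.norm_one_add_div_pow_sub_exp_le hw (Nat.cast_pos.mp hn_pos) hw_sq_lt.le
    _ < ε := (div_lt_iff₀ hn_pos).mpr hw_sq_e_lt
end

section
/- Let t > 0 and z ∈ ℝ with z = j/n for integers j, n with 0 < j ≤ n²−1, and let Y(x) = exp(−π²tx²)·cos(πxz). Then there are constants J(t), G(t) depending only on t, and an absolute constant H, such that |(1/n)·Σ_{k=−n²}^{n²−1} Y(k/n) − ∫_ℝ Y dμ| ≤ J(t)/n + G(t)·j/n² + H·j²/n³. -/
/-!
On a cell of width `h`, the Riemann sum differs from the integral by at most `h` times the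
variation `∫ |Y'|` of `Y` over the cell, so on `[-n, n]` with `h = 1/n` the error is at most
`(1/n) ∫ |Y'|`. Since `|Y'(x)| ≤ (2a|x| + πz) e^{-ax²}` with `a = π²t`, this is
`O_t(1/n) + O_t(j/n²)`. The part of `∫ Y` beyond `|x| = n` is at most
`(1/n) ∫ |x Y(x)| = O_t(1/n)`.
So the bound holds even with `H = 0`.
-/

open MeasureTheory Real Finset

section RiemannSum

variable {f f' : ℝ → ℝ}

theorem abs_mul_sub_intervalIntegral_le_of_hasDerivAt (hf : ∀ x, HasDerivAt f (f' x) x)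
    (hf' : Continuous f') (a : ℝ) {h : ℝ} (hh : 0 ≤ h) :
    |h * f a - ∫ x in a..a + h, f x| ≤ h * ∫ x in a..a + h, |f' x| := by
  have hfc : Continuous f := continuous_iff_continuousAt.2 fun x => (hf x).continuousAt
  have hab : a ≤ a + h := by linarith
  have hosc : ∀ x ∈ Set.uIoc a (a + h), ‖f a - f x‖ ≤ ∫ u in a..a + h, |f' u| := by
    intro x hx
    rw [Set.uIoc_of_le hab] at hx
    have hax : a ≤ x := hx.1.le
    calc ‖f a - f x‖ = ‖∫ u in a..x, f' u‖ := by
          rw [intervalIntegral.integral_eq_sub_of_hasDerivAt (fun u _ => hf u)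
            (hf'.intervalIntegrable _ _), norm_sub_rev]
      _ ≤ ∫ u in a..x, |f' u| := intervalIntegral.norm_integral_le_integral_norm hax
      _ ≤ ∫ u in a..a + h, |f' u| :=
          intervalIntegral.integral_mono_interval le_rfl hax hx.2
            (ae_of_all _ fun u => abs_nonneg _) (hf'.abs.intervalIntegrable _ _)
  have hconst : h * f a = ∫ _ in a..a + h, f a := by simp
  calc |h * f a - ∫ x in a..a + h, f x| = ‖∫ x in a..a + h, (f a - f x)‖ := by
        rw [hconst, intervalIntegral.integral_sub intervalIntegrable_const
          (hfc.intervalIntegrable _ _), Real.norm_eq_abs]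
    _ ≤ (∫ u in a..a + h, |f' u|) * |a + h - a| :=
        intervalIntegral.norm_integral_le_of_norm_le_const hosc
    _ = h * ∫ x in a..a + h, |f' x| := by rw [add_sub_cancel_left, abs_of_nonneg hh, mul_comm]

theorem abs_riemannSum_sub_intervalIntegral_le (hf : ∀ x, HasDerivAt f (f' x) x)
    (hf' : Continuous f') (a : ℝ) {h : ℝ} (hh : 0 ≤ h) (N : ℕ) :
    |h * ∑ i ∈ range N, f (a + i * h) - ∫ x in a..a + N * h, f x|
      ≤ h * ∫ x in a..a + N * h, |f' x| := by
  have hfc : Continuous f := continuous_iff_continuousAt.2 fun x => (hf x).continuousAt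
  induction N with
  | zero => simp
  | succ N ih =>
    have hcell := abs_mul_sub_intervalIntegral_le_of_hasDerivAt hf hf' (a + N * h) hh
    have hend : a + ((N + 1 : ℕ) : ℝ) * h = a + N * h + h := by push_cast; ring
    rw [hend, sum_range_succ, ← intervalIntegral.integral_add_adjacent_intervals
      (hfc.intervalIntegrable _ _) (hfc.intervalIntegrable _ _),
      ← intervalIntegral.integral_add_adjacent_intervals
      (hf'.abs.intervalIntegrable _ _) (hf'.abs.intervalIntegrable _ _)]
    calc _ = |(h * ∑ i ∈ range N, f (a + i * h) - ∫ x in a..a + N * h, f x)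
            + (h * f (a + N * h) - ∫ x in a + N * h..a + N * h + h, f x)| := by ring_nf
      _ ≤ _ := (abs_add_le _ _).trans (by rw [mul_add]; exact add_le_add ih hcell)

theorem abs_symmGridSum_sub_intervalIntegral_le (hf : ∀ x, HasDerivAt f (f' x) x)
    (hf' : Continuous f') {n : ℕ} (hn : 0 < n) :
    |(1 / n : ℝ) * ∑ k ∈ Icc (-(n : ℤ) ^ 2) ((n : ℤ) ^ 2 - 1), f ((k : ℝ) / n)
        - ∫ x in -n..n, f x| ≤ (1 / n : ℝ) * ∫ x in -n..n, |f' x| := by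
  have hn' : (0 : ℝ) < n := Nat.cast_pos.2 hn
  have hgrid : ∑ k ∈ Icc (-(n : ℤ) ^ 2) ((n : ℤ) ^ 2 - 1), f ((k : ℝ) / n)
      = ∑ i ∈ range (2 * n ^ 2), f (-n + i * (1 / n)) := by
    rw [Int.Icc_eq_finset_map, sum_map, show (n : ℤ) ^ 2 - 1 + 1 - -(n : ℤ) ^ 2
      = ((2 * n ^ 2 : ℕ) : ℤ) by push_cast; ring, Int.toNat_natCast]
    refine sum_congr rfl fun i _ => congr_arg f ?_
    simp only [Function.Embedding.trans_apply, Nat.castEmbedding_apply, addLeftEmbedding_apply,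
      Int.cast_add, Int.cast_neg, Int.cast_pow, Int.cast_natCast]
    field_simp
  have hend : -(n : ℝ) + ((2 * n ^ 2 : ℕ) : ℝ) * (1 / n) = n := by push_cast; field_simp; ring
  have h := abs_riemannSum_sub_intervalIntegral_le hf hf' (-n) (one_div_pos.2 hn').le (2 * n ^ 2)
  rwa [hend, ← hgrid] at h

end RiemannSum

theorem abs_integral_sub_intervalIntegral_le {f : ℝ → ℝ} (hf : Integrable f)
    (hxf : Integrable fun x => x * f x) {R : ℝ} (hR : 0 < R) :
    |(∫ x, f x) - ∫ x in -R..R, f x| ≤ (∫ x, |x * f x|) / R := by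
  have hs : MeasurableSet (Set.Ioc (-R) R) := measurableSet_Ioc
  have hcompl : (∫ x, f x) - ∫ x in -R..R, f x = ∫ x in (Set.Ioc (-R) R)ᶜ, f x := by
    rw [intervalIntegral.integral_of_le (by linarith), ← integral_add_compl hs hf,
      add_sub_cancel_left]
  have hmarkov : ∀ x ∈ (Set.Ioc (-R) R)ᶜ, |f x| ≤ |x * f x| / R := by
    intro x hx
    have hRx : R ≤ |x| := by
      simp only [Set.mem_compl_iff, Set.mem_Ioc, not_and_or, not_lt, not_le] at hx
      rcases hx with hx | hx
      · rw [abs_of_neg (by linarith)]; linarith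
      · rw [abs_of_pos (by linarith)]; linarith
    rw [le_div_iff₀ hR, abs_mul, mul_comm |x|]
    exact mul_le_mul_of_nonneg_left hRx (abs_nonneg _)
  calc |(∫ x, f x) - ∫ x in -R..R, f x| ≤ ∫ x in (Set.Ioc (-R) R)ᶜ, |f x| := by
        rw [hcompl]; exact abs_integral_le_integral_abs
    _ ≤ ∫ x in (Set.Ioc (-R) R)ᶜ, |x * f x| / R :=
        setIntegral_mono_on hf.abs.integrableOn (hxf.abs.div_const R).integrableOn hs.compl
          hmarkov
    _ ≤ ∫ x, |x * f x| / R :=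
        setIntegral_le_integral (hxf.abs.div_const R) (ae_of_all _ fun x => by positivity)
    _ = (∫ x, |x * f x|) / R := integral_div R _

noncomputable def gaussianCos (a c x : ℝ) : ℝ := exp (-a * x ^ 2) * cos (c * x)

noncomputable def gaussianCos' (a c x : ℝ) : ℝ :=
  -(2 * a * x) * exp (-a * x ^ 2) * cos (c * x) - c * exp (-a * x ^ 2) * sin (c * x)

section GaussianCos

variable {a : ℝ} (c : ℝ)

theorem hasDerivAt_gaussianCos (x : ℝ) :
    HasDerivAt (gaussianCos a c) (gaussianCos' a c x) x := by
  have hexp : HasDerivAt (fun x => exp (-a * x ^ 2)) (-(2 * a * x) * exp (-a * x ^ 2)) x :=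
    ((hasDerivAt_pow 2 x).const_mul (-a)).exp.congr_deriv (by ring)
  have hcos : HasDerivAt (fun x => cos (c * x)) (-(c * sin (c * x))) x :=
    ((hasDerivAt_id' x).const_mul c).cos.congr_deriv (by ring)
  exact (hexp.mul hcos).congr_deriv (by rw [gaussianCos']; ring)

theorem continuous_gaussianCos : Continuous (gaussianCos a c) := by
  unfold gaussianCos; fun_prop

theorem continuous_gaussianCos' : Continuous (gaussianCos' a c) := by
  unfold gaussianCos'; fun_prop

theorem abs_gaussianCos_le (x : ℝ) : |gaussianCos a c x| ≤ exp (-a * x ^ 2) := by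
  rw [gaussianCos, abs_mul, abs_exp]
  exact mul_le_of_le_one_right (exp_nonneg _) (abs_cos_le_one _)

theorem abs_gaussianCos'_le (ha : 0 ≤ a) (x : ℝ) :
    |gaussianCos' a c x| ≤ 2 * a * |x * exp (-a * x ^ 2)| + |c| * exp (-a * x ^ 2) := by
  rw [gaussianCos']
  refine (abs_sub _ _).trans (add_le_add ?_ ?_)
  · calc |-(2 * a * x) * exp (-a * x ^ 2) * cos (c * x)|
          = 2 * a * |x * exp (-a * x ^ 2)| * |cos (c * x)| := by
          rw [abs_mul, abs_mul, abs_neg, abs_mul, abs_mul, abs_mul, abs_of_nonneg ha, abs_two,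
            abs_exp]
          ring
      _ ≤ 2 * a * |x * exp (-a * x ^ 2)| :=
          mul_le_of_le_one_right (by positivity) (abs_cos_le_one _)
  · rw [abs_mul, abs_mul, abs_exp]
    exact mul_le_of_le_one_right (by positivity) (abs_sin_le_one _)

theorem integrable_gaussianCos (ha : 0 < a) : Integrable (gaussianCos a c) :=
  (integrable_exp_neg_mul_sq ha).mono' (continuous_gaussianCos c).aestronglyMeasurable
    (ae_of_all _ (abs_gaussianCos_le c))

theorem abs_mul_gaussianCos_le (x : ℝ) : |x * gaussianCos a c x| ≤ |x * exp (-a * x ^ 2)| := by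
  rw [abs_mul, abs_mul x, abs_exp]
  exact mul_le_mul_of_nonneg_left (abs_gaussianCos_le c x) (abs_nonneg x)

theorem integrable_mul_gaussianCos (ha : 0 < a) : Integrable fun x => x * gaussianCos a c x :=
  (integrable_mul_exp_neg_mul_sq ha).abs.mono'
    (continuous_id.mul (continuous_gaussianCos c)).aestronglyMeasurable
    (ae_of_all _ (abs_mul_gaussianCos_le c))

theorem integral_abs_mul_gaussianCos_le (ha : 0 < a) :
    ∫ x, |x * gaussianCos a c x| ≤ ∫ x, |x * exp (-a * x ^ 2)| :=
  integral_mono (integrable_mul_gaussianCos c ha).abs (integrable_mul_exp_neg_mul_sq ha).abs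
    (abs_mul_gaussianCos_le c)

theorem intervalIntegral_abs_gaussianCos'_le (ha : 0 < a) {R : ℝ} (hR : -R ≤ R) :
    ∫ x in -R..R, |gaussianCos' a c x|
      ≤ 2 * a * (∫ x, |x * exp (-a * x ^ 2)|) + |c| * √(π / a) := by
  have hdom : Integrable fun x => 2 * a * |x * exp (-a * x ^ 2)| + |c| * exp (-a * x ^ 2) :=
    ((integrable_mul_exp_neg_mul_sq ha).abs.const_mul _).add
      ((integrable_exp_neg_mul_sq ha).const_mul _)
  calc ∫ x in -R..R, |gaussianCos' a c x|
      ≤ ∫ x in -R..R, (2 * a * |x * exp (-a * x ^ 2)| + |c| * exp (-a * x ^ 2)) :=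
        intervalIntegral.integral_mono_on hR
          ((continuous_gaussianCos' c).abs.intervalIntegrable _ _)
          hdom.intervalIntegrable fun x _ => abs_gaussianCos'_le c ha.le x
    _ ≤ ∫ x, (2 * a * |x * exp (-a * x ^ 2)| + |c| * exp (-a * x ^ 2)) := by
        rw [intervalIntegral.integral_of_le hR]
        exact setIntegral_le_integral hdom (ae_of_all _ fun x => by positivity)
    _ = 2 * a * (∫ x, |x * exp (-a * x ^ 2)|) + |c| * √(π / a) := by
        rw [integral_add ((integrable_mul_exp_neg_mul_sq ha).abs.const_mul _)
          ((integrable_exp_neg_mul_sq ha).const_mul _), integral_const_mul, integral_const_mul,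
          integral_gaussian]

end GaussianCos

theorem stmt18 :
    ∃ H : ℝ, ∀ t : ℝ, 0 < t → ∃ J G : ℝ,
      ∀ (n : ℕ) (j : ℤ), 0 < j → j ≤ (n : ℤ) ^ 2 - 1 →
        |(1 / n : ℝ) * ∑ k ∈ Finset.Icc (-(n : ℤ) ^ 2) ((n : ℤ) ^ 2 - 1),
              Real.exp (-(Real.pi ^ 2) * t * ((k : ℝ) / n) ^ 2)
                * Real.cos (Real.pi * ((k : ℝ) / n) * ((j : ℝ) / n))
            - ∫ x : ℝ, Real.exp (-(Real.pi ^ 2) * t * x ^ 2)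
                * Real.cos (Real.pi * x * ((j : ℝ) / n))|
          ≤ J / n + G * (j : ℝ) / (n : ℝ) ^ 2 + H * (j : ℝ) ^ 2 / (n : ℝ) ^ 3 := by
  refine ⟨0, fun t ht => ?_⟩
  set a := π ^ 2 * t
  have ha : 0 < a := by positivity
  set M := ∫ x, |x * exp (-a * x ^ 2)|
  refine ⟨(2 * a + 1) * M, π * √(π / a), fun n j hj hjn => ?_⟩
  have hn : 0 < n := by
    have : (0 : ℤ) < n := by nlinarith
    exact_mod_cast this
  have hn' : (0 : ℝ) < n := Nat.cast_pos.2 hn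
  set c := π * ((j : ℝ) / n)
  have hY : ∀ x,
      exp (-(π ^ 2) * t * x ^ 2) * cos (π * x * ((j : ℝ) / n)) = gaussianCos a c x :=
    fun x => by simp only [gaussianCos, a, c]; congr 2 <;> ring
  have hriemann := abs_symmGridSum_sub_intervalIntegral_le
    (hasDerivAt_gaussianCos (a := a) c) (continuous_gaussianCos' c) hn
  have hderiv := intervalIntegral_abs_gaussianCos'_le c ha (R := n) (by linarith)
  have htail := (abs_integral_sub_intervalIntegral_le (integrable_gaussianCos c ha)
    (integrable_mul_gaussianCos c ha) hn').trans
    (div_le_div_of_nonneg_right (integral_abs_mul_gaussianCos_le c ha) hn'.le)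
  simp only [hY]
  calc _ ≤ (1 / n) * (2 * a * M + |c| * √(π / a)) + M / n := by
        refine (abs_sub_le _ (∫ x in -n..n, gaussianCos a c x) _).trans (add_le_add ?_ ?_)
        · exact hriemann.trans (mul_le_mul_of_nonneg_left hderiv (by positivity))
        · rwa [abs_sub_comm]
    _ = _ := by
        have hj' : (0 : ℝ) ≤ j := by exact_mod_cast hj.le
        rw [abs_of_nonneg (by positivity)]
        simp only [c]
        field_simp
        ring
end

section
/- Let t > 0, n ∈ ℕ, and j ∈ ℤ with 0 < j ≤ n²−1, and set z = j/n. Then there are constants K(t), G(t) depending only on t, and an absolute constant H, such that |(1/n)·Σ_{k=−n²}^{n²−1} exp(−π²t(k/n)²)·exp(iπ(k/n)z) − (1/√(πt))·exp(−z²/(4t))| ≤ K(t)/n + G(t)·j/n² + H·j²/n³. -/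
/-!
Poisson summation turns the Riemann sum of the Gaussian `exp (-π²t x²) exp (iπxz)` over the whole
grid `ℤ / n` into the `2n`-periodization `∑ₘ ĝ (z - 2nm)` of its Fourier transform `ĝ`. The term
`m = 0` is the exact transform; for `0 ≤ z ≤ n` every alias satisfies `|z - 2nm| ≥ n|m|`, so the
aliases together are `O(exp (-n²/8t)) = O(1/n)`. Cutting the grid sum down to `|k| ≤ n²` discards
terms with `π²t (k/n)² ≥ π²t |k|`, whose total is bounded independently of `n`, and this is then
divided by `n`. Hence the error is `O(1/n)`, and one may take `G = H = 0`.
-/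

open Real Finset
open scoped Complex

lemma summable_exp_neg_mul_abs {c : ℝ} (hc : 0 < c) :
    Summable fun k : ℤ => rexp (-c * |(k : ℝ)|) := by
  have h : Summable fun n : ℕ => rexp (-c * |((n : ℤ) : ℝ)|) := by
    simpa [mul_comm] using Real.summable_exp_nat_mul_iff.mpr (neg_lt_zero.mpr hc)
  exact h.of_nat_of_neg (by simpa using h)

lemma exp_neg_le_inv {x : ℝ} (hx : 0 < x) : rexp (-x) ≤ x⁻¹ := by
  rw [Real.exp_neg]
  exact inv_anti₀ hx (by linarith [Real.add_one_le_exp x])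

lemma abs_intCast_le_sq (k : ℤ) : |(k : ℝ)| ≤ (k : ℝ) ^ 2 := by
  rw [← sq_abs]
  exact_mod_cast Int.le_self_sq |k|

lemma norm_tsum_sub_sum_le {ι E : Type*} [NormedAddCommGroup E] {f : ι → E} {g : ι → ℝ}
    (hf : Summable f) (hg : Summable g) (hg0 : ∀ i, 0 ≤ g i) (S : Finset ι)
    (hfg : ∀ i ∉ S, ‖f i‖ ≤ g i) : ‖∑' i, f i - ∑ i ∈ S, f i‖ ≤ ∑' i, g i := by
  have hfg' : ∀ i : ↑((S : Set ι)ᶜ), ‖f i‖ ≤ g i := fun i => hfg i i.2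
  rw [← hf.sum_add_tsum_compl (s := S), add_sub_cancel_left]
  calc ‖∑' i : ↑((S : Set ι)ᶜ), f i‖ ≤ ∑' i : ↑((S : Set ι)ᶜ), g i :=
        tsum_of_norm_bounded (hg.subtype _).hasSum hfg'
    _ ≤ ∑' i, g i := hg.tsum_subtype_le g _ hg0

variable {t N : ℝ}

noncomputable def gaussianSample (t N z : ℝ) (k : ℤ) : ℂ :=
  (rexp (-(π ^ 2) * t * ((k : ℝ) / N) ^ 2) : ℂ) * cexp (Complex.I * π * ((k : ℝ) / N) * (z : ℂ))

lemma norm_gaussianSample (z : ℝ) (k : ℤ) :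
    ‖gaussianSample t N z k‖ = rexp (-(π ^ 2) * t * ((k : ℝ) / N) ^ 2) := by
  rw [gaussianSample, norm_mul, Complex.norm_real, Real.norm_of_nonneg (Real.exp_pos _).le,
    Complex.norm_exp]
  simp

lemma summable_gaussianSample (ht : 0 < t) (hN : N ≠ 0) (z : ℝ) :
    Summable (gaussianSample t N z) := by
  refine Summable.of_norm_bounded (summable_exp_neg_mul_abs (c := π ^ 2 * t / N ^ 2) (by positivity))
    fun k => ?_
  have hk : π ^ 2 * t / N ^ 2 * |(k : ℝ)| ≤ π ^ 2 * t / N ^ 2 * (k : ℝ) ^ 2 := by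
    gcongr
    exact abs_intCast_le_sq k
  rw [norm_gaussianSample, Real.exp_le_exp]
  calc -(π ^ 2) * t * ((k : ℝ) / N) ^ 2 = -(π ^ 2 * t / N ^ 2 * (k : ℝ) ^ 2) := by ring
    _ ≤ _ := by linarith

lemma tsum_gaussianSample (ht : 0 < t) (hN : 0 < N) (z : ℝ) :
    (1 / N : ℂ) * ∑' k : ℤ, gaussianSample t N z k
      = ((1 / √(π * t) : ℝ) : ℂ) * ((∑' m : ℤ, rexp (-(z - 2 * N * m) ^ 2 / (4 * t)) : ℝ) : ℂ) := by
  set a : ℂ := ((π * t / N ^ 2 : ℝ) : ℂ)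
  set b : ℂ := Complex.I * ((z / (2 * N) : ℝ) : ℂ)
  have hNc : (N : ℂ) ≠ 0 := by exact_mod_cast hN.ne'
  have htc : (t : ℂ) ≠ 0 := by exact_mod_cast ht.ne'
  have hπc : (π : ℂ) ≠ 0 := by exact_mod_cast pi_ne_zero
  have ha : 0 < a.re := by simp only [a, Complex.ofReal_re]; positivity
  have hsample : ∀ k : ℤ, gaussianSample t N z k = cexp (-π * a * k ^ 2 + 2 * π * b * k) := by
    intro k
    rw [gaussianSample, Complex.ofReal_exp, ← Complex.exp_add]
    congr 1
    simp only [a, b]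
    push_cast
    field_simp
  have halias : ∀ m : ℤ,
      cexp (-π / a * (m + Complex.I * b) ^ 2) = ((rexp (-(z - 2 * N * m) ^ 2 / (4 * t)) : ℝ) : ℂ) := by
    intro m
    rw [Complex.ofReal_exp]
    congr 1
    simp only [a, b, ← mul_assoc, Complex.I_mul_I]
    push_cast
    field_simp
    ring
  have hsqrt : a ^ (1 / 2 : ℂ) = ((√(π * t) / N : ℝ) : ℂ) := by
    rw [show (1 / 2 : ℂ) = ((1 / 2 : ℝ) : ℂ) by norm_num, ← Complex.ofReal_cpow (by positivity),
      ← Real.sqrt_eq_rpow, Real.sqrt_div (by positivity), Real.sqrt_sq hN.le]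
  have hsqrtc : ((√(π * t) : ℝ) : ℂ) ≠ 0 := by
    exact_mod_cast (Real.sqrt_pos.mpr (by positivity)).ne'
  rw [tsum_congr hsample, Complex.tsum_exp_neg_quadratic ha, tsum_congr halias, hsqrt,
    Complex.ofReal_tsum]
  push_cast
  field_simp

lemma sq_le_abs_of_notMem_Icc {n : ℕ} {k : ℤ} (hk : k ∉ Icc (-(n : ℤ) ^ 2) ((n : ℤ) ^ 2 - 1)) :
    (n : ℝ) ^ 2 ≤ |(k : ℝ)| := by
  have : (n : ℤ) ^ 2 ≤ |k| := by
    rw [mem_Icc, not_and_or, not_le, not_le] at hk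
    rcases hk with hk | hk
    · exact le_abs.mpr (Or.inr (by linarith))
    · exact le_abs.mpr (Or.inl (by linarith))
  exact_mod_cast this

lemma norm_tsum_sub_sum_gaussianSample_le (ht : 0 < t) (hN : 0 < N) (z : ℝ) (S : Finset ℤ)
    (hS : ∀ k ∉ S, N ^ 2 ≤ |(k : ℝ)|) :
    ‖∑' k, gaussianSample t N z k - ∑ k ∈ S, gaussianSample t N z k‖
      ≤ ∑' k : ℤ, rexp (-(π ^ 2 * t) * |(k : ℝ)|) := by
  refine norm_tsum_sub_sum_le (summable_gaussianSample ht hN.ne' z)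
    (summable_exp_neg_mul_abs (by positivity)) (fun _ => (Real.exp_pos _).le) S fun k hk => ?_
  have habs : |(k : ℝ)| ≤ ((k : ℝ) / N) ^ 2 := by
    rw [div_pow, le_div_iff₀ (by positivity), ← sq_abs (k : ℝ), sq |(k : ℝ)|]
    exact mul_le_mul_of_nonneg_left (hS k hk) (abs_nonneg _)
  rw [norm_gaussianSample, Real.exp_le_exp]
  nlinarith [mul_le_mul_of_nonneg_left habs (by positivity : (0 : ℝ) ≤ π ^ 2 * t)]

lemma mul_abs_le_abs_sub_two_mul {z : ℝ} (hz0 : 0 ≤ z) (hzN : z ≤ N) {m : ℤ} (hm : m ≠ 0) :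
    N * |(m : ℝ)| ≤ |z - 2 * N * m| := by
  have hm1 : 1 ≤ |(m : ℝ)| := by exact_mod_cast Int.one_le_abs hm
  have hN : 0 ≤ N := hz0.trans hzN
  calc N * |(m : ℝ)| ≤ 2 * N * |(m : ℝ)| - N := by nlinarith
    _ ≤ |2 * N * m| - |z| := by
        rw [abs_mul, abs_of_nonneg (by positivity : 0 ≤ 2 * N), abs_of_nonneg hz0]; linarith
    _ ≤ |z - 2 * N * m| := by rw [abs_sub_comm]; exact abs_sub_abs_le_abs_sub _ _

lemma exp_alias_le {z : ℝ} (ht : 0 < t) (hN : 1 ≤ N) (hz0 : 0 ≤ z) (hzN : z ≤ N) {m : ℤ} (hm : m ≠ 0) :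
    rexp (-(z - 2 * N * m) ^ 2 / (4 * t))
      ≤ rexp (-(N ^ 2 / (8 * t))) * rexp (-(8 * t)⁻¹ * |(m : ℝ)|) := by
  have hm1 : 1 ≤ (m : ℝ) ^ 2 := by
    rw [← sq_abs]; exact one_le_pow₀ (by exact_mod_cast Int.one_le_abs hm)
  have hNm : N ^ 2 * (m : ℝ) ^ 2 ≤ (z - 2 * N * m) ^ 2 := by
    rw [← sq_abs (z - _), ← sq_abs (m : ℝ), ← mul_pow]
    exact pow_le_pow_left₀ (by positivity) (mul_abs_le_abs_sub_two_mul hz0 hzN hm) 2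
  have hkey : N ^ 2 + |(m : ℝ)| ≤ 2 * (z - 2 * N * m) ^ 2 := by
    have hN1 : 1 ≤ N ^ 2 := one_le_pow₀ hN
    nlinarith [abs_intCast_le_sq m, mul_le_mul hN1 hm1 zero_le_one (by positivity)]
  rw [← Real.exp_add, Real.exp_le_exp, div_le_iff₀ (by positivity)]
  have : (-(N ^ 2 / (8 * t)) + -(8 * t)⁻¹ * |(m : ℝ)|) * (4 * t) = -(N ^ 2 + |(m : ℝ)|) / 2 := by
    field_simp; ring
  rw [this]
  linarith

lemma abs_tsum_alias_sub_le {z : ℝ} (ht : 0 < t) (hN : 1 ≤ N) (hz0 : 0 ≤ z) (hzN : z ≤ N) :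
    |∑' m : ℤ, rexp (-(z - 2 * N * m) ^ 2 / (4 * t)) - rexp (-z ^ 2 / (4 * t))|
      ≤ rexp (-(N ^ 2 / (8 * t))) * ∑' m : ℤ, rexp (-(8 * t)⁻¹ * |(m : ℝ)|) := by
  have hg := (summable_exp_neg_mul_abs (c := (8 * t)⁻¹) (by positivity)).mul_left
    (rexp (-(N ^ 2 / (8 * t))))
  have hbound : ∀ m ∉ ({0} : Finset ℤ), ‖rexp (-(z - 2 * N * m) ^ 2 / (4 * t))‖
      ≤ rexp (-(N ^ 2 / (8 * t))) * rexp (-(8 * t)⁻¹ * |(m : ℝ)|) := fun m hm => by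
    rw [Real.norm_of_nonneg (Real.exp_pos _).le]
    exact exp_alias_le ht hN hz0 hzN (by simpa using hm)
  have hf : Summable fun m : ℤ => rexp (-(z - 2 * N * m) ^ 2 / (4 * t)) :=
    Summable.of_norm_bounded_eventually hg
      ((Finset.finite_toSet {0}).eventually_cofinite_notMem.mono hbound)
  rw [← tsum_mul_left]
  simpa using norm_tsum_sub_sum_le hf hg (fun _ => by positivity) {0} hbound

lemma norm_riemannSum_sub_fourier_le (ht : 0 < t) {n : ℕ} {z : ℝ} (hn : 1 ≤ n) (hz0 : 0 ≤ z)
    (hzn : z ≤ n) :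
    ‖(1 / n : ℂ) * ∑ k ∈ Icc (-(n : ℤ) ^ 2) ((n : ℤ) ^ 2 - 1), gaussianSample t n z k
        - ((1 / √(π * t) : ℝ) : ℂ) * cexp (-(z : ℂ) ^ 2 / (4 * t))‖
      ≤ (∑' k : ℤ, rexp (-(π ^ 2 * t) * |(k : ℝ)|)
          + 8 * t / √(π * t) * ∑' m : ℤ, rexp (-(8 * t)⁻¹ * |(m : ℝ)|)) / n := by
  set S := Icc (-(n : ℤ) ^ 2) ((n : ℤ) ^ 2 - 1)
  set F := ∑' k, gaussianSample t n z k
  set P := ∑' m : ℤ, rexp (-(z - 2 * n * m) ^ 2 / (4 * t))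
  set T₁ := ∑' k : ℤ, rexp (-(π ^ 2 * t) * |(k : ℝ)|)
  set T₂ := ∑' m : ℤ, rexp (-(8 * t)⁻¹ * |(m : ℝ)|)
  have hN : (1 : ℝ) ≤ n := by exact_mod_cast hn
  have hN0 : (0 : ℝ) < n := by linarith
  have hpoisson := tsum_gaussianSample ht hN0 z
  rw [Complex.ofReal_natCast] at hpoisson
  have hdecomp : (1 / n : ℂ) * ∑ k ∈ S, gaussianSample t n z k
        - ((1 / √(π * t) : ℝ) : ℂ) * cexp (-(z : ℂ) ^ 2 / (4 * t))
      = -((1 / n : ℂ) * (F - ∑ k ∈ S, gaussianSample t n z k))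
        + ((1 / √(π * t) : ℝ) : ℂ) * ((P - rexp (-z ^ 2 / (4 * t)) : ℝ) : ℂ) := by
    have hexp : ((rexp (-z ^ 2 / (4 * t)) : ℝ) : ℂ) = cexp (-(z : ℂ) ^ 2 / (4 * t)) := by
      rw [Complex.ofReal_exp]
      push_cast
      rfl
    rw [Complex.ofReal_sub, hexp]
    linear_combination hpoisson
  have htrunc : ‖F - ∑ k ∈ S, gaussianSample t n z k‖ ≤ T₁ :=
    norm_tsum_sub_sum_gaussianSample_le ht hN0 z S fun k hk => sq_le_abs_of_notMem_Icc hk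
  have halias : |P - rexp (-z ^ 2 / (4 * t))| ≤ 8 * t / n * T₂ := by
    refine (abs_tsum_alias_sub_le ht hN hz0 hzn).trans (mul_le_mul_of_nonneg_right ?_ ?_)
    · calc rexp (-((n : ℝ) ^ 2 / (8 * t))) ≤ ((n : ℝ) ^ 2 / (8 * t))⁻¹ :=
            exp_neg_le_inv (by positivity)
        _ = 8 * t / n / n := by field_simp
        _ ≤ 8 * t / n := div_le_self (by positivity) hN
    · exact tsum_nonneg fun _ => (Real.exp_pos _).le
  rw [hdecomp]
  refine (norm_add_le _ _).trans ?_
  rw [norm_neg, norm_mul, norm_mul, Complex.norm_real, Complex.norm_real, norm_div, norm_one,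
    Complex.norm_natCast, Real.norm_of_nonneg (by positivity), Real.norm_eq_abs]
  calc 1 / (n : ℝ) * ‖F - ∑ k ∈ S, gaussianSample t n z k‖
        + 1 / √(π * t) * |P - rexp (-z ^ 2 / (4 * t))|
      ≤ 1 / n * T₁ + 1 / √(π * t) * (8 * t / n * T₂) := by gcongr
    _ = (T₁ + 8 * t / √(π * t) * T₂) / n := by ring

theorem stmt19 :
    ∃ H : ℝ, ∀ t : ℝ, 0 < t → ∃ K G : ℝ,
      ∀ (n : ℕ) (j : ℤ), 0 < j → j ≤ (n : ℤ) ^ 2 - 1 →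
        norm ((1 / n : ℂ) * ∑ k ∈ Finset.Icc (-(n : ℤ) ^ 2) ((n : ℤ) ^ 2 - 1),
              (Real.exp (-(Real.pi ^ 2) * t * ((k : ℝ) / n) ^ 2) : ℂ)
                * Complex.exp (Complex.I * Real.pi * ((k : ℝ) / n) * (((j : ℝ) / n) : ℂ))
            - (1 / Real.sqrt (Real.pi * t) : ℝ)
                * Complex.exp (-(((j : ℝ) / n : ℝ) : ℂ) ^ 2 / (4 * t)))
          ≤ K / n + G * (j : ℝ) / (n : ℝ) ^ 2 + H * (j : ℝ) ^ 2 / (n : ℝ) ^ 3 := by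
  refine ⟨0, fun t ht => ⟨∑' k : ℤ, rexp (-(π ^ 2 * t) * |(k : ℝ)|)
    + 8 * t / √(π * t) * ∑' m : ℤ, rexp (-(8 * t)⁻¹ * |(m : ℝ)|), 0, fun n j hj hjn => ?_⟩⟩
  have hn : 1 ≤ n := Nat.one_le_iff_ne_zero.mpr <| by
    rintro rfl
    norm_num at hjn
    omega
  have hjn' : (j : ℝ) ≤ (n : ℝ) ^ 2 := by exact_mod_cast hjn.trans (Int.sub_le_self _ zero_le_one)
  have hz0 : 0 ≤ (j : ℝ) / n := by positivity
  have hzn : (j : ℝ) / n ≤ n := by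
    rw [div_le_iff₀ (by positivity)]
    linarith
  have hmain := norm_riemannSum_sub_fourier_le ht hn hz0 hzn
  simp only [gaussianSample, Complex.ofReal_div, Complex.ofReal_natCast] at hmain ⊢
  simpa only [zero_mul, zero_div, add_zero] using hmain
end
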